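/- In U(𝔤): there exist nonzero rational numbers C₀, C₁, C₂ such that (F₃₁)_L(a) = C₀·F₁₀, (F₃₁²)_L(b) = C₁·(F₃₁E₁₁ − F₂₁E₀₁), and (F₃₁³)_L(c) = C₂·(F₃₁(H₃₂+1)E₀₁ + F₃₂E₀₁² − F₃₁²E₃₂); moreover (F₃₁²)_L(a) = 0, (F₃₁³)_L(b) = 0, and (F₃₁⁴)_L(c) = 0. (The paper gives C₀ = 1, C₁ = −2!, C₂ = 3!.) -/

import Mathlib

/-- The canonical embedding of a Lie algebra into its universal enveloping algebra. -/
noncomputable def ιU {L : Type*} [LieRing L] [LieAlgebra ℂ L] (x : L) :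
    UniversalEnvelopingAlgebra ℂ L :=
  UniversalEnvelopingAlgebra.ι ℂ x

/-- The adjoint action `X_L : f ↦ Xf − fX` of `X ∈ L` on `U(L)`. -/
noncomputable def adU {L : Type*} [LieRing L] [LieAlgebra ℂ L] (x : L)
    (f : UniversalEnvelopingAlgebra ℂ L) : UniversalEnvelopingAlgebra ℂ L :=
  ιU x * f - f * ιU x

/-- A Lie algebra over `ℂ` equipped with Chevalley generators of type `G₂`:
`E₁₀, F₁₀, H₁₀` correspond to the short simple root `α` and `E₀₁, F₀₁, H₀₁` to the long
simple root `β`, subject to the Chevalley relations and the Serre relations, and the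
generators generate the Lie algebra.  (By Serre's theorem such a Lie algebra is a quotient of
the simple Lie algebra of type `G₂`.) -/
structure G2Gens (L : Type*) [LieRing L] [LieAlgebra ℂ L] where
  E10 : L
  E01 : L
  F10 : L
  F01 : L
  H10 : L
  H01 : L
  hH10H01 : ⁅H10, H01⁆ = 0
  hE10F10 : ⁅E10, F10⁆ = H10
  hE01F01 : ⁅E01, F01⁆ = H01
  hE10F01 : ⁅E10, F01⁆ = 0
  hE01F10 : ⁅E01, F10⁆ = 0
  hH10E10 : ⁅H10, E10⁆ = (2 : ℂ) • E10
  hH01E01 : ⁅H01, E01⁆ = (2 : ℂ) • E01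
  hH10E01 : ⁅H10, E01⁆ = (-3 : ℂ) • E01
  hH01E10 : ⁅H01, E10⁆ = (-1 : ℂ) • E10
  hH10F10 : ⁅H10, F10⁆ = (-2 : ℂ) • F10
  hH01F01 : ⁅H01, F01⁆ = (-2 : ℂ) • F01
  hH10F01 : ⁅H10, F01⁆ = (3 : ℂ) • F01
  hH01F10 : ⁅H01, F10⁆ = (1 : ℂ) • F10
  serreE1 : ⁅E10, ⁅E10, ⁅E10, ⁅E10, E01⁆⁆⁆⁆ = 0
  serreE2 : ⁅E01, ⁅E01, E10⁆⁆ = 0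
  serreF1 : ⁅F10, ⁅F10, ⁅F10, ⁅F10, F01⁆⁆⁆⁆ = 0
  serreF2 : ⁅F01, ⁅F01, F10⁆⁆ = 0
  generates : LieSubalgebra.lieSpan ℂ L {E10, E01, F10, F01, H10, H01} = ⊤

namespace G2Gens

variable {L : Type*} [LieRing L] [LieAlgebra ℂ L] (g : G2Gens L)

/-- The root vector `E₁₁ = [E₁₀, E₀₁]`. -/
def E11 : L := ⁅g.E10, g.E01⁆
/-- The root vector `E₂₁ = (1/2)[E₁₁, E₁₀]`. -/
noncomputable def E21 : L := (2 : ℂ)⁻¹ • ⁅g.E11, g.E10⁆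
/-- The root vector `E₃₁ = (1/3)[E₂₁, E₁₀]`. -/
noncomputable def E31 : L := (3 : ℂ)⁻¹ • ⁅g.E21, g.E10⁆
/-- The root vector `E₃₂ = [E₃₁, E₀₁]`. -/
noncomputable def E32 : L := ⁅g.E31, g.E01⁆
/-- The root vector `F₁₁ = [F₀₁, F₁₀]`. -/
def F11 : L := ⁅g.F01, g.F10⁆
/-- The root vector `F₂₁ = (1/2)[F₁₀, F₁₁]`. -/
noncomputable def F21 : L := (2 : ℂ)⁻¹ • ⁅g.F10, g.F11⁆
/-- The root vector `F₃₁ = (1/3)[F₁₀, F₂₁]`. -/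
noncomputable def F31 : L := (3 : ℂ)⁻¹ • ⁅g.F10, g.F21⁆
/-- The root vector `F₃₂ = [F₀₁, F₃₁]`. -/
noncomputable def F32 : L := ⁅g.F01, g.F31⁆
/-- The coroot `H₁₁ = H₁₀ + 3H₀₁`. -/
def H11 : L := g.H10 + (3 : ℂ) • g.H01
/-- The coroot `H₂₁ = 2H₁₀ + 3H₀₁`. -/
def H21 : L := (2 : ℂ) • g.H10 + (3 : ℂ) • g.H01
/-- The coroot `H₃₁ = H₁₀ + H₀₁`. -/
def H31 : L := g.H10 + g.H01
/-- The coroot `H₃₂ = H₁₀ + 2H₀₁`. -/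
def H32 : L := g.H10 + (2 : ℂ) • g.H01

/-- The element `a = E₂₁` of `U(𝔤)`. -/
noncomputable def aU : UniversalEnvelopingAlgebra ℂ L := ιU g.E21
/-- The element `b = E₃₁E₁₁ − E₃₂E₁₀` of `U(𝔤)`. -/
noncomputable def bU : UniversalEnvelopingAlgebra ℂ L :=
  ιU g.E31 * ιU g.E11 - ιU g.E32 * ιU g.E10
/-- The element `c = E₃₁²E₀₁ − E₃₂E₃₁H₀₁ − E₃₂²F₀₁` of `U(𝔤)`. -/
noncomputable def cU : UniversalEnvelopingAlgebra ℂ L :=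
  ιU g.E31 * ιU g.E31 * ιU g.E01 - ιU g.E32 * ιU g.E31 * ιU g.H01
    - ιU g.E32 * ιU g.E32 * ιU g.F01
/-- The element `u = (1/3)a² − b` of `U(𝔤)`. -/
noncomputable def uU : UniversalEnvelopingAlgebra ℂ L :=
  (3 : ℂ)⁻¹ • (g.aU * g.aU) - g.bU
/-- The element `v = (2/9)a³ − ab − 3c` of `U(𝔤)`. -/
noncomputable def vU : UniversalEnvelopingAlgebra ℂ L :=
  ((2 : ℂ) / 9) • (g.aU * g.aU * g.aU) - g.aU * g.bU - (3 : ℂ) • g.cU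

/-- `f ≡ h (mod U(𝔤)𝔫₊)`:  `f − h` lies in the left ideal of `U(𝔤)` generated by `E₁₀`
and `E₀₁`. -/
def EqModN (f h : UniversalEnvelopingAlgebra ℂ L) : Prop :=
  ∃ A B : UniversalEnvelopingAlgebra ℂ L, f - h = A * ιU g.E10 + B * ιU g.E01

end G2Gens

/-!
`D = (F₃₁)_L` is the derivation of `U(𝔤)` extending `ad F₃₁`, so everything reduces to the
brackets of `F₃₁` with root vectors and coroots, which follow from the Chevalley and Serre
relations. On the letters of `a`, `b`, `c`, `D` runs along the short strings
`E₂₁ ↦ F₁₀ ↦ 0`, `E₁₀ ↦ -F₂₁ ↦ 0`, `E₃₁ ↦ -H₃₁ ↦ -2F₃₁ ↦ 0`, `E₃₂ ↦ E₀₁ ↦ 0`,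
`H₀₁ ↦ -F₃₁ ↦ 0`, `F₀₁ ↦ -F₃₂ ↦ 0`, and it kills `E₀₁`, `E₁₁`. So the Leibniz rule leaves
only a handful of terms in `D²b` and `D³c`; moving `F₃₁` to the left and `E₀₁` to the right
with the commutation relations of `U(𝔤)` turns them into `-2` and `6` times the stated
elements, and `D` kills those elements.
-/

section UniversalEnvelopingAlgebra

variable {L : Type*} [LieRing L] [LieAlgebra ℂ L]

lemma ιU_zero : ιU (0 : L) = 0 := map_zero _

lemma ιU_neg (x : L) : ιU (-x) = -ιU x := map_neg _ x

lemma ιU_add (x y : L) : ιU (x + y) = ιU x + ιU y := map_add _ x y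

lemma ιU_lie (x y : L) : ιU ⁅x, y⁆ = ιU x * ιU y - ιU y * ιU x := by
  simp only [ιU, LieHom.map_lie, Ring.lie_def]

lemma ιU_mul_ιU (x y : L) : ιU x * ιU y = ιU y * ιU x + ιU ⁅x, y⁆ := by
  rw [ιU_lie]; abel

lemma ιU_mul_ιU_mul (x y : L) (u : UniversalEnvelopingAlgebra ℂ L) :
    ιU x * (ιU y * u) = ιU y * (ιU x * u) + ιU ⁅x, y⁆ * u := by
  rw [← mul_assoc, ιU_mul_ιU, add_mul, mul_assoc]

lemma adU_ιU (x y : L) : adU x (ιU y) = ιU ⁅x, y⁆ := (ιU_lie x y).symm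

lemma adU_one (x : L) : adU x 1 = 0 := by simp [adU]

lemma adU_add (x : L) (f h : UniversalEnvelopingAlgebra ℂ L) :
    adU x (f + h) = adU x f + adU x h := by simp only [adU]; noncomm_ring

lemma adU_sub (x : L) (f h : UniversalEnvelopingAlgebra ℂ L) :
    adU x (f - h) = adU x f - adU x h := by simp only [adU]; noncomm_ring

lemma adU_neg (x : L) (f : UniversalEnvelopingAlgebra ℂ L) :
    adU x (-f) = -adU x f := by simp only [adU]; noncomm_ring

lemma adU_smul (x : L) (c : ℂ) (f : UniversalEnvelopingAlgebra ℂ L) :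
    adU x (c • f) = c • adU x f := by
  simp only [adU, mul_smul_comm, smul_mul_assoc, smul_sub]

lemma adU_mul (x : L) (f h : UniversalEnvelopingAlgebra ℂ L) :
    adU x (f * h) = adU x f * h + f * adU x h := by simp only [adU]; noncomm_ring

end UniversalEnvelopingAlgebra

namespace G2Gens

variable {L : Type*} [LieRing L] [LieAlgebra ℂ L] (g : G2Gens L)

lemma lie_F10_F11 : ⁅g.F10, g.F11⁆ = (2 : ℂ) • g.F21 := by
  rw [F21, smul_smul]; norm_num

lemma lie_F10_F21 : ⁅g.F10, g.F21⁆ = (3 : ℂ) • g.F31 := by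
  rw [F31, smul_smul]; norm_num

lemma lie_H10_F11 : ⁅g.H10, g.F11⁆ = g.F11 := by
  rw [F11, leibniz_lie, g.hH10F01, g.hH10F10, smul_lie, lie_smul]
  module

lemma lie_H01_F11 : ⁅g.H01, g.F11⁆ = -g.F11 := by
  rw [F11, leibniz_lie, g.hH01F01, g.hH01F10, smul_lie, lie_smul]
  module

lemma lie_H10_F21 : ⁅g.H10, g.F21⁆ = -g.F21 := by
  rw [F21, lie_smul, leibniz_lie, g.hH10F10, g.lie_H10_F11, smul_lie]
  module

lemma lie_H01_F21 : ⁅g.H01, g.F21⁆ = 0 := by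
  rw [F21, lie_smul, leibniz_lie, g.hH01F10, g.lie_H01_F11, smul_lie, lie_neg]
  module

lemma lie_H10_F31 : ⁅g.H10, g.F31⁆ = (-3 : ℂ) • g.F31 := by
  rw [F31, lie_smul, leibniz_lie, g.hH10F10, g.lie_H10_F21, smul_lie, lie_neg]
  module

lemma lie_H01_F31 : ⁅g.H01, g.F31⁆ = g.F31 := by
  rw [F31, lie_smul, leibniz_lie, g.hH01F10, g.lie_H01_F21, lie_zero, smul_lie]
  module

lemma lie_E10_F11 : ⁅g.E10, g.F11⁆ = (-3 : ℂ) • g.F01 := by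
  rw [F11, leibniz_lie, g.hE10F01, g.hE10F10, zero_lie, zero_add, ← lie_skew, g.hH10F01]
  module

lemma lie_E01_F11 : ⁅g.E01, g.F11⁆ = g.F10 := by
  rw [F11, leibniz_lie, g.hE01F01, g.hE01F10, lie_zero, add_zero, g.hH01F10, one_smul]

lemma lie_E10_F21 : ⁅g.E10, g.F21⁆ = (2 : ℂ) • g.F11 := by
  rw [F21, lie_smul, leibniz_lie, g.hE10F10, g.lie_H10_F11, g.lie_E10_F11, lie_smul,
    ← lie_skew, F11]
  module

lemma lie_E01_F21 : ⁅g.E01, g.F21⁆ = 0 := by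
  rw [F21, lie_smul, leibniz_lie, g.hE01F10, zero_lie, g.lie_E01_F11, lie_self, zero_add,
    smul_zero]

lemma lie_E10_F31 : ⁅g.E10, g.F31⁆ = g.F21 := by
  rw [F31, lie_smul, leibniz_lie, g.hE10F10, g.lie_H10_F21, g.lie_E10_F21, lie_smul,
    g.lie_F10_F11]
  module

lemma lie_E01_F31 : ⁅g.E01, g.F31⁆ = 0 := by
  rw [F31, lie_smul, leibniz_lie, g.hE01F10, zero_lie, g.lie_E01_F21, lie_zero, zero_add,
    smul_zero]

lemma lie_E01_F32 : ⁅g.E01, g.F32⁆ = g.F31 := by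
  rw [F32, leibniz_lie, g.hE01F01, g.lie_E01_F31, lie_zero, add_zero, g.lie_H01_F31]

lemma lie_F10_F31 : ⁅g.F10, g.F31⁆ = 0 :=
  calc ⁅g.F10, g.F31⁆ = -(6 : ℂ)⁻¹ • ⁅g.F10, ⁅g.F10, ⁅g.F10, ⁅g.F10, g.F01⁆⁆⁆⁆ := by
        rw [F31, F21, F11, ← lie_skew g.F10 g.F01]
        simp only [lie_smul, lie_neg, smul_smul, smul_neg, neg_smul]
        norm_num
    _ = 0 := by rw [g.serreF1, smul_zero]

lemma lie_F01_F21 : ⁅g.F01, g.F21⁆ = 0 := by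
  rw [F21, lie_smul, leibniz_lie, F11, g.serreF2, lie_zero, ← F11, lie_self, zero_add,
    smul_zero]

lemma lie_F11_F21 : ⁅g.F11, g.F21⁆ = (3 : ℂ) • g.F32 := by
  rw [F11, lie_lie, g.lie_F10_F21, g.lie_F01_F21, lie_zero, sub_zero, lie_smul, F32]

lemma lie_F10_F32_eq_neg : ⁅g.F10, g.F32⁆ = -⁅g.F11, g.F31⁆ := by
  rw [F32, leibniz_lie, g.lie_F10_F31, lie_zero, add_zero, ← lie_skew g.F10 g.F01, ← F11,
    neg_lie]

lemma lie_F11_F31 : ⁅g.F11, g.F31⁆ = 0 := by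
  have h : ⁅g.F11, g.F31⁆ = ⁅g.F10, g.F32⁆ := by
    conv_lhs => rw [F31]
    rw [lie_smul, leibniz_lie, ← lie_skew g.F11 g.F10, g.lie_F10_F11, g.lie_F11_F21, neg_lie,
      smul_lie, lie_self, lie_smul]
    module
  rw [g.lie_F10_F32_eq_neg, eq_neg_iff_add_eq_zero, ← two_smul ℂ] at h
  exact (smul_eq_zero.mp h).resolve_left two_ne_zero

lemma lie_F10_F32 : ⁅g.F10, g.F32⁆ = 0 := by
  rw [g.lie_F10_F32_eq_neg, g.lie_F11_F31, neg_zero]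

lemma lie_F31_F21 : ⁅g.F31, g.F21⁆ = 0 := by
  rw [F21, lie_smul, leibniz_lie, ← lie_skew g.F31 g.F10, g.lie_F10_F31, ← lie_skew g.F31 g.F11,
    g.lie_F11_F31]
  simp

lemma lie_F31_F32 : ⁅g.F31, g.F32⁆ = 0 := by
  have h : ⁅g.F21, g.F32⁆ = 0 := by
    rw [F32, leibniz_lie, ← lie_skew g.F21 g.F01, g.lie_F01_F21, ← lie_skew g.F21 g.F31,
      g.lie_F31_F21]
    simp
  rw [F31, smul_lie, lie_lie, h, g.lie_F10_F32]
  simp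

lemma lie_H10_E11 : ⁅g.H10, g.E11⁆ = -g.E11 := by
  rw [E11, leibniz_lie, g.hH10E10, g.hH10E01, smul_lie, lie_smul]
  module

lemma lie_E11_F01 : ⁅g.E11, g.F01⁆ = g.E10 := by
  rw [E11, lie_lie, g.hE01F01, g.hE10F01, lie_zero, sub_zero, ← lie_skew, g.hH01E10]
  module

lemma lie_E11_F10 : ⁅g.E11, g.F10⁆ = (-3 : ℂ) • g.E01 := by
  rw [E11, lie_lie, g.hE01F10, g.hE10F10, lie_zero, zero_sub, ← lie_skew, g.hH10E01]
  module

lemma lie_E11_F11 : ⁅g.E11, g.F11⁆ = g.H11 := by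
  rw [F11, leibniz_lie, g.lie_E11_F01, g.hE10F10, g.lie_E11_F10, lie_smul, ← lie_skew g.F01,
    g.hE01F01, H11]
  module

lemma lie_E21_F01 : ⁅g.E21, g.F01⁆ = 0 := by
  rw [E21, smul_lie, lie_lie, g.hE10F01, lie_zero, g.lie_E11_F01, lie_self, sub_zero,
    smul_zero]

lemma lie_E21_F10 : ⁅g.E21, g.F10⁆ = (2 : ℂ) • g.E11 := by
  rw [E21, smul_lie, lie_lie, g.hE10F10, g.lie_E11_F10, lie_smul, ← lie_skew g.E11 g.H10,
    g.lie_H10_E11, ← E11]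
  module

lemma lie_E21_F11 : ⁅g.E21, g.F11⁆ = (-2 : ℂ) • g.E10 := by
  rw [F11, leibniz_lie, g.lie_E21_F01, zero_lie, zero_add, g.lie_E21_F10, lie_smul,
    ← lie_skew g.F01 g.E11, g.lie_E11_F01]
  module

lemma lie_E11_F21 : ⁅g.E11, g.F21⁆ = (-2 : ℂ) • g.F10 := by
  rw [F21, lie_smul, leibniz_lie, g.lie_E11_F10, g.lie_E11_F11, smul_lie, g.lie_E01_F11,
    ← lie_skew g.F10 g.H11, H11, add_lie, smul_lie, g.hH10F10, g.hH01F10]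
  module

lemma lie_E21_F21 : ⁅g.E21, g.F21⁆ = g.H21 := by
  rw [F21, lie_smul, leibniz_lie, g.lie_E21_F10, g.lie_E21_F11, smul_lie, lie_smul,
    g.lie_E11_F11, ← lie_skew g.F10 g.E10, g.hE10F10, H11, H21]
  module

lemma lie_F31_E10 : ⁅g.F31, g.E10⁆ = -g.F21 := by
  rw [← lie_skew, g.lie_E10_F31]

lemma lie_F31_E01 : ⁅g.F31, g.E01⁆ = 0 := by
  rw [← lie_skew, g.lie_E01_F31, neg_zero]

lemma lie_F31_E11 : ⁅g.F31, g.E11⁆ = 0 := by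
  rw [E11, leibniz_lie, g.lie_F31_E10, g.lie_F31_E01, lie_zero, add_zero, neg_lie,
    ← lie_skew g.F21 g.E01, g.lie_E01_F21, neg_zero, neg_zero]

lemma lie_F31_E21 : ⁅g.F31, g.E21⁆ = g.F10 := by
  rw [E21, lie_smul, leibniz_lie, g.lie_F31_E11, zero_lie, zero_add, g.lie_F31_E10, lie_neg,
    g.lie_E11_F21]
  module

lemma lie_F31_E31 : ⁅g.F31, g.E31⁆ = -g.H31 := by
  rw [E31, lie_smul, leibniz_lie, g.lie_F31_E21, g.lie_F31_E10, lie_neg, g.lie_E21_F21,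
    ← lie_skew g.F10 g.E10, g.hE10F10, H21, H31]
  module

lemma lie_F31_E32 : ⁅g.F31, g.E32⁆ = g.E01 := by
  rw [E32, leibniz_lie, g.lie_F31_E31, g.lie_F31_E01, lie_zero, add_zero, neg_lie, H31,
    add_lie, g.hH10E01, g.hH01E01]
  module

lemma lie_F31_F01 : ⁅g.F31, g.F01⁆ = -g.F32 := by
  rw [← lie_skew]; rfl

lemma lie_F31_F10 : ⁅g.F31, g.F10⁆ = 0 := by
  rw [← lie_skew, g.lie_F10_F31, neg_zero]

lemma lie_F31_H01 : ⁅g.F31, g.H01⁆ = -g.F31 := by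
  rw [← lie_skew, g.lie_H01_F31]

lemma lie_F31_H31 : ⁅g.F31, g.H31⁆ = (2 : ℂ) • g.F31 := by
  rw [← lie_skew, H31, add_lie, g.lie_H10_F31, g.lie_H01_F31]
  module

lemma lie_F31_H32 : ⁅g.F31, g.H32⁆ = g.F31 := by
  rw [← lie_skew, H32, add_lie, smul_lie, g.lie_H10_F31, g.lie_H01_F31]
  module

lemma lie_H31_F31 : ⁅g.H31, g.F31⁆ = (-2 : ℂ) • g.F31 := by
  rw [← lie_skew, g.lie_F31_H31, neg_smul]

lemma lie_E01_H31 : ⁅g.E01, g.H31⁆ = g.E01 := by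
  rw [← lie_skew, H31, add_lie, g.hH10E01, g.hH01E01]
  module

lemma lie_E01_H01 : ⁅g.E01, g.H01⁆ = (-2 : ℂ) • g.E01 := by
  rw [← lie_skew, g.hH01E01, neg_smul]

lemma lie_E32_F31 : ⁅g.E32, g.F31⁆ = -g.E01 := by
  rw [← lie_skew, g.lie_F31_E32]

lemma adU_F31_aU : adU g.F31 g.aU = ιU g.F10 := by
  rw [aU, adU_ιU, g.lie_F31_E21]

lemma adU_F31_iterate_two_aU : (adU g.F31)^[2] g.aU = 0 := by
  rw [Function.iterate_succ_apply', Function.iterate_one, g.adU_F31_aU, adU_ιU, g.lie_F31_F10,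
    ιU_zero]

lemma adU_F31_iterate_two_bU : (adU g.F31)^[2] g.bU =
    (-2 : ℂ) • (ιU g.F31 * ιU g.E11 - ιU g.F21 * ιU g.E01) := by
  have hcomm : ιU g.E01 * ιU g.F21 = ιU g.F21 * ιU g.E01 := by
    rw [ιU_mul_ιU, g.lie_E01_F21, ιU_zero, add_zero]
  simp only [Function.iterate_succ_apply', Function.iterate_zero_apply, bU, adU_add, adU_sub,
    adU_mul, adU_neg, adU_ιU, g.lie_F31_E31, g.lie_F31_E11, g.lie_F31_E32, g.lie_F31_E10,
    g.lie_F31_H31, g.lie_F31_F21, g.lie_F31_E01, ιU_neg, ιU_zero, two_smul, ιU_add, mul_zero,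
    zero_mul, add_zero, zero_add, neg_zero]
  rw [neg_smul, ofNat_smul_eq_nsmul (R := ℂ), ← hcomm]
  noncomm_ring

lemma adU_F31_iterate_three_bU : (adU g.F31)^[3] g.bU = 0 := by
  rw [Function.iterate_succ_apply', g.adU_F31_iterate_two_bU, adU_smul]
  refine smul_eq_zero_of_right _ ?_
  simp only [adU_sub, adU_mul, adU_ιU, lie_self, g.lie_F31_E11, g.lie_F31_F21, g.lie_F31_E01,
    ιU_zero, mul_zero, zero_mul, add_zero, sub_zero]

lemma adU_F31_iterate_three_cU : (adU g.F31)^[3] g.cU =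
    (6 : ℂ) • (ιU g.F31 * (ιU g.H32 + 1) * ιU g.E01 + ιU g.F32 * (ιU g.E01 * ιU g.E01)
      - ιU g.F31 * ιU g.F31 * ιU g.E32) := by
  calc (adU g.F31)^[3] g.cU
      = (6 : ℂ) • ((ιU g.H31 * ιU g.F31 + ιU g.F31 * ιU g.H31) * ιU g.E01
          + ιU g.E01 * ιU g.F31 * ιU g.H01 - ιU g.E01 * ιU g.H31 * ιU g.F31
          - ιU g.E32 * ιU g.F31 * ιU g.F31 + ιU g.E01 * ιU g.E01 * ιU g.F32) := by
        simp only [Function.iterate_succ_apply', Function.iterate_zero_apply, cU, adU_add,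
          adU_sub, adU_mul, adU_neg, adU_ιU, g.lie_F31_E31, g.lie_F31_E32, g.lie_F31_E01,
          g.lie_F31_H01, g.lie_F31_F01, g.lie_F31_H31, lie_self, g.lie_F31_F32, ιU_neg, ιU_zero,
          two_smul, ιU_add, mul_zero, zero_mul, add_zero, zero_add, neg_zero]
        rw [ofNat_smul_eq_nsmul (R := ℂ)]
        noncomm_ring
    _ = _ := by
        have hH32 : g.H32 = g.H31 + g.H01 := by rw [H32, H31]; module
        congr 1
        simp only [hH32, ιU_add, mul_assoc, add_mul, mul_add, mul_one,
          ιU_mul_ιU_mul g.H31 g.F31, ιU_mul_ιU_mul g.E01 g.F32, ιU_mul_ιU g.H31 g.F31,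
          ιU_mul_ιU g.E01 g.F31, ιU_mul_ιU g.E01 g.H31, ιU_mul_ιU g.E01 g.H01,
          ιU_mul_ιU g.E32 g.F31, ιU_mul_ιU g.E01 g.F32, g.lie_H31_F31, g.lie_E01_F31,
          g.lie_E01_H31, g.lie_E01_H01, g.lie_E32_F31, g.lie_E01_F32, ιU_neg, ιU_zero, neg_mul,
          mul_neg, two_smul, neg_smul]
        noncomm_ring

lemma adU_F31_iterate_four_cU : (adU g.F31)^[4] g.cU = 0 := by
  rw [Function.iterate_succ_apply', g.adU_F31_iterate_three_cU, adU_smul]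
  refine smul_eq_zero_of_right _ ?_
  simp only [adU_add, adU_sub, adU_mul, adU_one, adU_ιU, lie_self, g.lie_F31_H32, g.lie_F31_F32,
    g.lie_F31_E01, g.lie_F31_E32, ιU_zero, mul_zero, zero_mul, add_zero, zero_add]
  noncomm_ring

end G2Gens

/-- **Lemma A.4, second family (lem-firststep).**  Identities in `U(𝔤)` for the adjoint action
of powers of `F₃₁` on `a`, `b`, `c`. -/
theorem G2Gens.adF31_identities
    {L : Type*} [LieRing L] [LieAlgebra ℂ L] (g : G2Gens L) :
    (∃ C₀ C₁ C₂ : ℚ, C₀ ≠ 0 ∧ C₁ ≠ 0 ∧ C₂ ≠ 0 ∧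
      adU g.F31 g.aU = (C₀ : ℂ) • ιU g.F10 ∧
      (adU g.F31)^[2] g.bU = (C₁ : ℂ) • (ιU g.F31 * ιU g.E11 - ιU g.F21 * ιU g.E01) ∧
      (adU g.F31)^[3] g.cU =
        (C₂ : ℂ) • (ιU g.F31 * (ιU g.H32 + 1) * ιU g.E01 + ιU g.F32 * (ιU g.E01 * ιU g.E01)
          - ιU g.F31 * ιU g.F31 * ιU g.E32)) ∧
    (adU g.F31)^[2] g.aU = 0 ∧
    (adU g.F31)^[3] g.bU = 0 ∧
    (adU g.F31)^[4] g.cU = 0 := by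
  refine ⟨⟨1, -2, 6, by norm_num, by norm_num, by norm_num, ?_, ?_, ?_⟩,
    g.adU_F31_iterate_two_aU, g.adU_F31_iterate_three_bU, g.adU_F31_iterate_four_cU⟩
  · rw [g.adU_F31_aU]; norm_num
  · rw [g.adU_F31_iterate_two_bU]; norm_num
  · rw [g.adU_F31_iterate_three_cU]; norm_num
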